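/- Let M₁,...,M_m be symmetric t×t matrices over F_q with M_i M_j = 0 for all i,j. Then the set of row spaces of the matrices N_X = [X | α I_t], where X ranges over nonzero elements of the matrix algebra generated by M₁,...,M_m and α over F_q \ {0}, is an LCD subspace code in F_q^{2t}: for any two such matrices N, N', the row space of N intersects the dual of the row space of N' trivially. -/

import Mathlib

open Matrix

/-- The Euclidean dual of a linear code `C ⊆ F^ι`:
all vectors orthogonal (w.r.t. the standard bilinear form) to every codeword. -/
def dualCode (F : Type*) [Field F] {ι : Type*} [Fintype ι]
    (C : Submodule F (ι → F)) : Submodule F (ι → F) where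
  carrier := {v | ∀ c ∈ C, v ⬝ᵥ c = 0}
  add_mem' := by
    intro a b ha hb c hc
    simp [add_dotProduct, ha c hc, hb c hc]
  zero_mem' := by intro c hc; simp
  smul_mem' := by
    intro r a ha c hc
    simp [smul_dotProduct, ha c hc]

/-- The row space of a matrix: the span of its rows. -/
def rowSpace (F : Type*) [Field F] {κ ι : Type*} (G : Matrix κ ι F) :
    Submodule F (ι → F) := Submodule.span F (Set.range fun k => G k)

/-! Since the `M_i` multiply to zero, the algebra they generate is just their linear span, so it
consists of symmetric matrices `X` with `X Y = 0` for any two of its elements. A vector of the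
row space of `[X | αI]` is `(uX, αu)`, and its products with the rows of `[Y | α'I]` form the
vector `Y Xᵀ u + α'α u = α'α u`; lying in the dual code forces this to vanish, hence `u = 0`. -/

section SquareZero

open Pointwise

variable {R A : Type*} [CommSemiring R] [Semiring A] [Algebra R A] {s : Set A}

theorem Submodule.mul_eq_zero_of_mem_span (hs : ∀ a ∈ s, ∀ b ∈ s, a * b = 0) {a b : A}
    (ha : a ∈ span R s) (hb : b ∈ span R s) : a * b = 0 := by
  have hab : a * b ∈ span R (s * s) := span_mul_span R s s ▸ mul_mem_mul ha hb
  have hss : span R (s * s) = ⊥ :=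
    span_eq_bot.2 <| Set.forall_mem_image2.2 hs
  simpa [hss] using hab

theorem NonUnitalAlgebra.adjoin_toSubmodule_of_mul_eq_zero
    (hs : ∀ a ∈ s, ∀ b ∈ s, a * b = 0) :
    (adjoin R s).toSubmodule = Submodule.span R s := by
  refine le_antisymm ?_ (Submodule.span_le.2 (subset_adjoin R))
  have hmul : ∀ a b, a ∈ Submodule.span R s → b ∈ Submodule.span R s →
      a * b ∈ Submodule.span R s := fun a b ha hb =>
    Submodule.mul_eq_zero_of_mem_span hs ha hb ▸ zero_mem _
  exact adjoin_le (S := (Submodule.span R s).toNonUnitalSubalgebra hmul) Submodule.subset_span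

end SquareZero

theorem Matrix.isSymm_of_mem_span {R α n : Type*} [Semiring R] [AddCommMonoid α] [Module R α]
    {s : Set (Matrix n n α)} (hs : ∀ A ∈ s, A.IsSymm) {A : Matrix n n α}
    (hA : A ∈ Submodule.span R s) : A.IsSymm := by
  induction hA using Submodule.span_induction with
  | mem B hB => exact hs B hB
  | zero => exact isSymm_zero
  | add B C _ _ hB hC => exact hB.add hC
  | smul r B _ hB => exact hB.smul r

section RowSpace

variable {F : Type*} [Field F] {κ ι : Type*} [Fintype κ]

theorem mem_rowSpace_iff {G : Matrix κ ι F} {v : ι → F} :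
    v ∈ rowSpace F G ↔ ∃ u, u ᵥ* G = v :=
  (SetLike.ext_iff.1 (range_vecMulLinear G).symm v).trans LinearMap.mem_range

theorem mem_dualCode_rowSpace_iff [Fintype ι] {G : Matrix κ ι F} {v : ι → F} :
    v ∈ dualCode F (rowSpace F G) ↔ G *ᵥ v = 0 := by
  have hdual : v ∈ dualCode F (rowSpace F G) ↔ ∀ u, (G *ᵥ v) ⬝ᵥ u = 0 := by
    simp only [dualCode, Submodule.mem_mk, AddSubmonoid.mem_mk, AddSubsemigroup.mem_mk,
      Set.mem_ofPred_eq, mem_rowSpace_iff, forall_exists_index, forall_apply_eq_imp_iff]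
    simp only [dotProduct_comm v, ← dotProduct_mulVec]
    exact forall_congr' fun u => by rw [dotProduct_comm]
  rw [hdual, dotProduct_eq_zero_iff]

end RowSpace

theorem rowSpace_fromCols_inf_dualCode_eq_bot {F n : Type*} [Field F] [Fintype n]
    [DecidableEq n] {X Y : Matrix n n F} (hYX : Y * Xᵀ = 0) {α α' : F} (hα : α ≠ 0)
    (hα' : α' ≠ 0) :
    rowSpace F (fromCols X (α • (1 : Matrix n n F))) ⊓
      dualCode F (rowSpace F (fromCols Y (α' • (1 : Matrix n n F)))) = ⊥ := by
  rw [eq_bot_iff]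
  intro v hv
  obtain ⟨hv, hv'⟩ := Submodule.mem_inf.1 hv
  obtain ⟨u, rfl⟩ := mem_rowSpace_iff.1 hv
  rw [mem_dualCode_rowSpace_iff, vecMul_fromCols, fromCols_mulVec_sumElim] at hv'
  have hXY : Y *ᵥ (u ᵥ* X) = 0 := by
    rw [← mulVec_transpose, mulVec_mulVec, hYX, zero_mulVec]
  have hu : (α' * α) • u = 0 := by
    simpa [hXY, smul_mulVec, vecMul_smul, mul_smul] using hv'
  rw [smul_eq_zero, or_iff_right (mul_ne_zero hα' hα)] at hu
  simp [hu]

theorem stmt7_general (F : Type*) [Field F] {t m : ℕ}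
    (M : Fin m → Matrix (Fin t) (Fin t) F)
    (hsymm : ∀ i, (M i)ᵀ = M i)
    (hM : ∀ i j, M i * M j = 0)
    (X Y : Matrix (Fin t) (Fin t) F)
    (hX : X ∈ NonUnitalAlgebra.adjoin F (Set.range M))
    (hY : Y ∈ NonUnitalAlgebra.adjoin F (Set.range M))
    (α α' : F) (hα : α ≠ 0) (hα' : α' ≠ 0) :
    rowSpace F (fromCols X (α • (1 : Matrix (Fin t) (Fin t) F))) ⊓
      dualCode F (rowSpace F (fromCols Y (α' • (1 : Matrix (Fin t) (Fin t) F)))) = ⊥ := by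
  have hrange : ∀ A ∈ Set.range M, ∀ B ∈ Set.range M, A * B = 0 :=
    Set.forall_mem_range.2 fun i => Set.forall_mem_range.2 fun j => hM i j
  have hspan : ∀ {A}, A ∈ NonUnitalAlgebra.adjoin F (Set.range M) →
      A ∈ Submodule.span F (Set.range M) := fun hA => by
    rwa [← NonUnitalAlgebra.adjoin_toSubmodule_of_mul_eq_zero hrange]
  have hXsymm : X.IsSymm :=
    isSymm_of_mem_span (Set.forall_mem_range.2 hsymm) (hspan hX)
  refine rowSpace_fromCols_inf_dualCode_eq_bot ?_ hα hα'
  rw [hXsymm.eq]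
  exact Submodule.mul_eq_zero_of_mem_span hrange (hspan hY) (hspan hX)

/-- For symmetric `M_i` with `M_i M_j = 0`, the row spaces of the
matrices `[X | α I]`, `X` nonzero in the algebra generated by the `M_i` and
`α ≠ 0`, form an LCD subspace code in `F_q^{2t}`. -/
theorem stmt7 (F : Type*) [Field F] [Fintype F] {t m : ℕ}
    (M : Fin m → Matrix (Fin t) (Fin t) F)
    (hsymm : ∀ i, (M i)ᵀ = M i)
    (hM : ∀ i j, M i * M j = 0)
    (X Y : Matrix (Fin t) (Fin t) F)
    (hX : X ∈ NonUnitalAlgebra.adjoin F (Set.range M)) (hX0 : X ≠ 0)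
    (hY : Y ∈ NonUnitalAlgebra.adjoin F (Set.range M)) (hY0 : Y ≠ 0)
    (α α' : F) (hα : α ≠ 0) (hα' : α' ≠ 0) :
    rowSpace F (fromCols X (α • (1 : Matrix (Fin t) (Fin t) F))) ⊓
      dualCode F (rowSpace F (fromCols Y (α' • (1 : Matrix (Fin t) (Fin t) F)))) = ⊥ :=
  stmt7_general F M hsymm hM X Y hX hY α α' hα hα'
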